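/- If p, q, n, t are integers with p, q, n positive and p even, then F_{pq} · ∑_{k=1}^{2n} (−1)^{k−1} G_{pk+pq+t} = F_{pn} · ∑_{k=1}^{2q} (−1)^{k−1} G_{pk+pn+t}. -/

import Mathlib

/-!
For even `b`, Vajda's identity `F (a + b) * H (y + b) = F a * H y + F b * H (y + a + b)`, applied to
the Fibonacci-like sequence `H m = G m - G (m + b)`, telescopes the alternating sum:
`F b * ∑_{k=1}^{2n} (-1)^(k-1) G (b k + c) = F (b n) * (G (b n + c) - G (b n + b + c))`.
For `b = p` and `c = p q + t`, multiplying by `F (p q)` gives an expression symmetric in `n` and `q`,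
and `F p ≠ 0` cancels.
-/

open Finset

def IsFibonacciLike {R : Type*} [Add R] (G : ℤ → R) : Prop :=
  ∀ m : ℤ, G (m + 1) = G m + G (m - 1)

namespace IsFibonacciLike

theorem sub_shift {R : Type*} [AddCommGroup R] {G : ℤ → R} (hG : IsFibonacciLike G) (b : ℤ) :
    IsFibonacciLike (fun m => G m - G (m + b)) := by
  intro m
  have h := hG (m + b)
  rw [add_right_comm, add_sub_right_comm] at h
  simp only [hG m, h]
  abel

theorem apply_natCast {R : Type*} [AddCommMonoidWithOne R] {F : ℤ → R}
    (hF0 : F 0 = 0) (hF1 : F 1 = 1) (hF : IsFibonacciLike F) (n : ℕ) : F n = Nat.fib n := by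
  suffices ∀ n : ℕ, F n = Nat.fib n ∧ F (n + 1) = Nat.fib (n + 1) from (this n).1
  intro n
  induction n with
  | zero => simp [hF0, hF1]
  | succ n ih =>
    refine ⟨by exact_mod_cast ih.2, ?_⟩
    push_cast
    rw [hF, add_sub_cancel_right, ih.1, ih.2, Nat.fib_add_two, Nat.cast_add, add_comm]

theorem apply_neg_one {R : Type*} [AddGroupWithOne R] {F : ℤ → R}
    (hF0 : F 0 = 0) (hF1 : F 1 = 1) (hF : IsFibonacciLike F) : F (-1) = 1 := by
  simpa [hF0, hF1] using (hF 0).symm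

variable {R : Type*} [CommRing R] {F G : ℤ → R}

theorem apply_add (hF0 : F 0 = 0) (hF1 : F 1 = 1) (hF : IsFibonacciLike F)
    (hG : IsFibonacciLike G) (a x : ℤ) : G (x + a) = F a * G (x + 1) + F (a - 1) * G x := by
  induction a using Int.induction_on generalizing x with
  | zero => simp [hF0, apply_neg_one hF0 hF1 hF]
  | succ i ih =>
    have h := ih (x + 1)
    rw [show x + 1 + i = x + (i + 1) by ring] at h
    have hGx := hG (x + 1)
    rw [add_sub_cancel_right] at hGx
    rw [add_sub_cancel_right]
    linear_combination h + F i * hGx - G (x + 1) * hF i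
  | pred i ih =>
    have h := ih (x - 1)
    have hFi := hF (-i - 1)
    rw [sub_add_cancel] at h hFi
    rw [show x - 1 + -i = x + (-i - 1) by ring] at h
    linear_combination h - F (-i - 1) * hG x + G x * hFi

theorem cassini (hF0 : F 0 = 0) (hF1 : F 1 = 1) (hF : IsFibonacciLike F) (m : ℕ) :
    F (m + 1) * F (m - 1) - F m ^ 2 = (-1) ^ m := by
  induction m with
  | zero => simp [hF0, hF1, apply_neg_one hF0 hF1 hF]
  | succ m ih =>
    have h := hF (m + 1)
    rw [add_sub_cancel_right] at h
    push_cast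
    rw [add_sub_cancel_right, h, pow_succ]
    linear_combination -ih - F (m + 1) * hF m

theorem d_ocagne (hF0 : F 0 = 0) (hF1 : F 1 = 1) (hF : IsFibonacciLike F) (a : ℤ) (b : ℕ) :
    F (a + b) * F (b - 1) - F (a + b - 1) * F b = (-1) ^ b * F a := by
  have h₁ := apply_add hF0 hF1 hF hF b a
  have h₂ := apply_add hF0 hF1 hF hF b (a - 1)
  rw [sub_add_cancel, sub_add_eq_add_sub] at h₂
  rw [h₁, h₂, ← cassini hF0 hF1 hF b]
  linear_combination F b * F (b - 1) * hF a - F a * F (b - 1) * hF b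

theorem vajda (hF0 : F 0 = 0) (hF1 : F 1 = 1) (hF : IsFibonacciLike F)
    (hG : IsFibonacciLike G) (a y : ℤ) (b : ℕ) :
    F (a + b) * G (y + b) = (-1) ^ b * F a * G y + F b * G (y + (a + b)) := by
  rw [apply_add hF0 hF1 hF hG b, apply_add hF0 hF1 hF hG (a + b)]
  linear_combination G y * d_ocagne hF0 hF1 hF a b

theorem mul_sum_alternating (hF0 : F 0 = 0) (hF1 : F 1 = 1) (hF : IsFibonacciLike F)
    (hG : IsFibonacciLike G) {b : ℕ} (hb : Even b) (c : ℤ) (n : ℕ) :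
    F b * ∑ k ∈ Icc 1 (2 * n), (-1) ^ (k - 1) * G (b * k + c) =
      F (b * n) * (G (b * n + c) - G (b * n + b + c)) := by
  induction n with
  | zero => simp [hF0]
  | succ n ih =>
    rw [show 2 * (n + 1) = 2 * n + 1 + 1 by ring, sum_Icc_succ_top (by omega),
      sum_Icc_succ_top (by omega), mul_add, mul_add, ih]
    have h := vajda hF0 hF1 hF (hG.sub_shift b) (b * n) (b * n + c) b
    rw [hb.neg_one_pow, one_mul] at h
    simp only [Nat.add_sub_cancel, pow_succ, pow_mul]
    push_cast
    ring_nf at h ⊢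
    linear_combination -h

end IsFibonacciLike

theorem stmt14_general (F G : ℤ → ℤ)
    (hF0 : F 0 = 0) (hF1 : F 1 = 1) (hF : ∀ m : ℤ, F (m+1) = F m + F (m-1))
    (hG : ∀ m : ℤ, G (m+1) = G m + G (m-1))
    (p q n : ℕ) (t : ℤ) (hpe : Even p) :
    F (p*q) * ∑ k ∈ Icc 1 (2*n), (-1 : ℤ)^(k-1) * G ((p*k : ℤ) + p*q + t) =
    F (p*n) * ∑ k ∈ Icc 1 (2*q), (-1 : ℤ)^(k-1) * G ((p*k : ℤ) + p*n + t) := by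
  rcases Nat.eq_zero_or_pos p with rfl | hp
  · simp [hF0]
  have hFp : F p ≠ 0 := by
    rw [IsFibonacciLike.apply_natCast hF0 hF1 hF]
    exact_mod_cast (Nat.fib_pos.mpr hp).ne'
  have key := IsFibonacciLike.mul_sum_alternating hF0 hF1 hF hG hpe
  apply mul_left_cancel₀ hFp
  simp only [add_assoc]
  rw [mul_left_comm, key, mul_left_comm (F p), key]
  ring_nf

theorem stmt14 (F G : ℤ → ℤ)
    (hF0 : F 0 = 0) (hF1 : F 1 = 1) (hF : ∀ m : ℤ, F (m+1) = F m + F (m-1))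
    (hG : ∀ m : ℤ, G (m+1) = G m + G (m-1))
    (p q n : ℕ) (t : ℤ) (hp : 0 < p) (hq : 0 < q) (hn : 0 < n) (hpe : Even p) :
    F (p*q) * ∑ k ∈ Icc 1 (2*n), (-1 : ℤ)^(k-1) * G ((p*k : ℤ) + p*q + t) =
    F (p*n) * ∑ k ∈ Icc 1 (2*q), (-1 : ℤ)^(k-1) * G ((p*k : ℤ) + p*n + t) :=
  stmt14_general F G hF0 hF1 hF hG p q n t hpe
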